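/- arXiv:1412.5734 — 2 statements merged into one kernel-verified Lean document; each statement's English description precedes it below -/
import Mathlib

section
/- For any positive integers r, m, n, every coefficient of the one-variable polynomial ∑_{k=0}^{n-1} (−1)^k (2k+1) · S_k^{(r)}(x)^m is divisible by n, where S_n^{(r)}(x) := ∑_{k=0}^{n} C(n,k)^r · C(n+k,k)^r · x^k. -/
/-!
The coefficient of `x^d` in `S_k^{(1)}` is `Q_d(k) = C(k,d) C(k+d,d)` (`schmidtCoeff d k`), which
is, up to the factor `(d!)²`, the polynomial `∏_{j<d} (y - j(j+1))` in `y = k(k+1)`. The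
recurrence `(y - i(i+1)) Q_i = (i+1)² Q_{i+1}` gives, by induction on `b`, the linearization
`Q_a Q_b = ∑_i C(i,a) C(i,b) C(a+b,i) Q_i`, so every coefficient of `(S_k^{(r)})^m`, as a function
of `k`, is an integer combination of the `Q_i`. For each `i` the alternating sum telescopes:
`∑_{k<n} (-1)^k (2k+1) Q_i(k) = (-1)^(n+1) (n-i) Q_i(n)`, and `(n-i) C(n,i) = n C(n-1,i)`.
-/

/-- The one-variable Schmidt polynomial
`S_n^{(r)}(x) := ∑_{k=0}^{n} C(n,k)^r · C(n+k,k)^r · x^k`. -/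
noncomputable def schmidtPoly (r n : ℕ) : Polynomial ℤ :=
  ∑ k ∈ Finset.range (n + 1),
    Polynomial.C (((n.choose k) ^ r * ((n + k).choose k) ^ r : ℕ) : ℤ) * Polynomial.X ^ k

open Finset Polynomial

lemma sub_mul_choose (x i : ℕ) :
    ((x : ℤ) - i) * x.choose i = (i + 1) * x.choose (i + 1) := by
  rcases le_or_gt i x with h | h
  · have := Nat.choose_succ_right_eq x i
    zify [h] at this
    linarith
  · simp [Nat.choose_eq_zero_of_lt h, Nat.choose_eq_zero_of_lt (Nat.lt_succ_of_lt h)]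

lemma add_one_sub_mul_choose (x a : ℕ) :
    ((x : ℤ) + 1 - a) * (x + 1).choose a = (x + 1) * x.choose a := by
  rcases le_or_gt a (x + 1) with h | h
  · have := Nat.choose_mul_succ_eq x a
    zify [h] at this
    linarith
  · simp [Nat.choose_eq_zero_of_lt h, Nat.choose_eq_zero_of_lt (Nat.lt_of_succ_lt h)]

def schmidtCoeff (i k : ℕ) : ℤ := k.choose i * (k + i).choose i

lemma schmidtCoeff_zero_left : schmidtCoeff 0 = 1 := by
  ext k
  simp [schmidtCoeff]

lemma schmidtCoeff_eq_zero_of_lt {i k : ℕ} (h : k < i) : schmidtCoeff i k = 0 := by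
  simp [schmidtCoeff, Nat.choose_eq_zero_of_lt h]

lemma sub_mul_schmidtCoeff (i x : ℕ) :
    ((x : ℤ) * (x + 1) - i * (i + 1)) * schmidtCoeff i x =
      (i + 1) ^ 2 * schmidtCoeff (i + 1) x := by
  have hx := sub_mul_choose x i
  have hxi : ((x + i + 1 : ℕ) : ℤ) * (x + i).choose i =
      (x + i + 1).choose (i + 1) * (i + 1 : ℕ) := by
    exact_mod_cast Nat.add_one_mul_choose_eq (x + i) i
  simp only [schmidtCoeff, ← add_assoc]
  push_cast at hxi
  linear_combination
    ((x : ℤ) + i + 1) * (x + i).choose i * hx + (i + 1) * x.choose (i + 1) * hxi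

def linCoeff (a b i : ℕ) : ℤ := i.choose a * i.choose b * (a + b).choose i

lemma linCoeff_succ_succ (a b i : ℕ) :
    ((b : ℤ) + 1) ^ 2 * linCoeff a (b + 1) (i + 1) =
      linCoeff a b i * (i + 1) ^ 2 + linCoeff a b (i + 1) * ((i + 1) * (i + 2) - b * (b + 1)) := by
  have h1 := sub_mul_choose (i + 1) b
  have h2 : ((a + b + 1).choose (i + 1) : ℤ) = (a + b).choose i + (a + b).choose (i + 1) := by
    exact_mod_cast Nat.choose_succ_succ (a + b) i
  have h3 := sub_mul_choose (a + b) i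
  have h4 := add_one_sub_mul_choose i a
  have h5 := add_one_sub_mul_choose i b
  simp only [linCoeff, ← add_assoc]
  push_cast at h1 h3
  linear_combination (-((b : ℤ) + 1) * (i + 1).choose a * (a + b + 1).choose (i + 1)) * h1
    + (((i : ℤ) + 1 - b) * (b + 1) * (i + 1).choose a * (i + 1).choose b) * h2
    + (((i : ℤ) + 1 - b) * (i + 1).choose a * (i + 1).choose b) * h3
    + (((i : ℤ) + 1 - b) * (i + 1).choose b * (a + b).choose i) * h4
    + (((i : ℤ) + 1) * i.choose a * (a + b).choose i) * h5

lemma sum_range_shift_of_eq_zero {M : Type*} [AddCommMonoid M] (g : ℕ → M) {N : ℕ}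
    (h0 : g 0 = 0) (hN : g N = 0) :
    ∑ i ∈ range N, g i = ∑ i ∈ range N, g (i + 1) := by
  rw [← add_zero (∑ i ∈ range N, g i), ← hN, ← sum_range_succ, sum_range_succ', h0,
    add_zero]

lemma schmidtCoeff_mul_schmidtCoeff (a b x : ℕ) :
    schmidtCoeff a x * schmidtCoeff b x =
      ∑ i ∈ range (a + b + 1), linCoeff a b i * schmidtCoeff i x := by
  induction b with
  | zero =>
    rw [sum_range_succ, sum_eq_zero fun i hi => ?_]
    · simp [linCoeff, schmidtCoeff_zero_left]
    · simp [linCoeff, Nat.choose_eq_zero_of_lt (mem_range.mp hi)]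
  | succ b ih =>
    let g i := linCoeff a b i * ((i : ℤ) * (i + 1) - b * (b + 1)) * schmidtCoeff i x
    have hg0 : g 0 = 0 := by
      rcases b.eq_zero_or_pos with rfl | hb
      · simp [g]
      · simp [g, linCoeff, Nat.choose_eq_zero_of_lt hb]
    have hgN : g (a + b + 1) = 0 := by simp [g, linCoeff]
    have hb : ((b : ℤ) + 1) ^ 2 ≠ 0 := by positivity
    refine mul_left_cancel₀ hb ?_
    calc ((b : ℤ) + 1) ^ 2 * (schmidtCoeff a x * schmidtCoeff (b + 1) x)
        = ((x : ℤ) * (x + 1) - b * (b + 1)) * (schmidtCoeff a x * schmidtCoeff b x) := by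
          linear_combination -schmidtCoeff a x * sub_mul_schmidtCoeff b x
      _ = ∑ i ∈ range (a + b + 1),
            (linCoeff a b i * (i + 1) ^ 2 * schmidtCoeff (i + 1) x + g i) := by
          rw [ih, mul_sum]
          exact sum_congr rfl fun i _ => by
            linear_combination linCoeff a b i * sub_mul_schmidtCoeff i x
      _ = ∑ i ∈ range (a + b + 1),
            (linCoeff a b i * (i + 1) ^ 2 * schmidtCoeff (i + 1) x + g (i + 1)) := by
          rw [sum_add_distrib, sum_add_distrib, sum_range_shift_of_eq_zero g hg0 hgN]
      _ = ∑ i ∈ range (a + b + 1),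
            ((b : ℤ) + 1) ^ 2 * (linCoeff a (b + 1) (i + 1) * schmidtCoeff (i + 1) x) :=
          sum_congr rfl fun i _ => by
            push_cast [g]
            linear_combination -schmidtCoeff (i + 1) x * linCoeff_succ_succ a b i
      _ = ((b : ℤ) + 1) ^ 2 *
            ∑ i ∈ range (a + (b + 1) + 1), linCoeff a (b + 1) i * schmidtCoeff i x := by
          rw [mul_sum, show a + (b + 1) + 1 = a + b + 1 + 1 by ring, sum_range_succ' _ (a + b + 1)]
          simp [linCoeff]

def schmidtSpan : Submodule ℤ (ℕ → ℤ) := Submodule.span ℤ (Set.range schmidtCoeff)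

lemma mul_mem_schmidtSpan {f g : ℕ → ℤ} (hf : f ∈ schmidtSpan) (hg : g ∈ schmidtSpan) :
    f * g ∈ schmidtSpan := by
  refine Submodule.mul_le.mp ?_ f hf g hg
  rw [schmidtSpan, Submodule.span_mul_span, Submodule.span_le]
  rintro _ ⟨_, ⟨a, rfl⟩, _, ⟨b, rfl⟩, rfl⟩
  have hab : schmidtCoeff a * schmidtCoeff b =
      ∑ i ∈ range (a + b + 1), linCoeff a b i • schmidtCoeff i := by
    ext x
    simp [schmidtCoeff_mul_schmidtCoeff]
  change schmidtCoeff a * schmidtCoeff b ∈ _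
  rw [hab]
  exact Submodule.sum_mem _ fun i _ => Submodule.smul_mem _ _ (Submodule.subset_span ⟨i, rfl⟩)

def schmidtAlgebra : Subalgebra ℤ (ℕ → ℤ) :=
  schmidtSpan.toSubalgebra (schmidtCoeff_zero_left ▸ Submodule.subset_span ⟨0, rfl⟩)
    fun _ _ => mul_mem_schmidtSpan

lemma schmidtCoeff_mem_schmidtAlgebra (i : ℕ) : schmidtCoeff i ∈ schmidtAlgebra :=
  Submodule.subset_span ⟨i, rfl⟩

lemma coeff_schmidtPoly {r : ℕ} (hr : r ≠ 0) (k d : ℕ) :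
    (schmidtPoly r k).coeff d = schmidtCoeff d k ^ r := by
  rw [schmidtPoly, finsetSum_coeff]
  simp only [coeff_C_mul, coeff_X_pow, mul_ite, mul_one, mul_zero, sum_ite_eq, mem_range]
  split_ifs with hd
  · push_cast [schmidtCoeff]
    ring
  · rw [schmidtCoeff_eq_zero_of_lt (by omega), zero_pow hr]

lemma coeff_schmidtPoly_pow_mem {r : ℕ} (hr : r ≠ 0) (m d : ℕ) :
    (fun k => ((schmidtPoly r k) ^ m).coeff d) ∈ schmidtAlgebra := by
  induction m generalizing d with
  | zero =>
    simp only [pow_zero, coeff_one]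
    split_ifs
    · exact one_mem _
    · exact zero_mem _
  | succ m ih =>
    simp only [pow_succ, coeff_mul, coeff_schmidtPoly hr, ← sum_fn]
    exact Subalgebra.sum_mem _ fun p _ =>
      mul_mem (ih p.1) (pow_mem (schmidtCoeff_mem_schmidtAlgebra p.2) r)

def alternatingSum (n : ℕ) : (ℕ → ℤ) →ₗ[ℤ] ℤ where
  toFun f := ∑ k ∈ range n, (-1) ^ k * (2 * (k : ℤ) + 1) * f k
  map_add' f g := by simp only [Pi.add_apply, mul_add, sum_add_distrib]
  map_smul' c f := by
    simp only [Pi.smul_apply, smul_eq_mul, RingHom.id_apply, mul_sum]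
    exact sum_congr rfl fun _ _ => by ring

lemma alternatingSum_schmidtCoeff (n i : ℕ) :
    alternatingSum n (schmidtCoeff i) = (-1) ^ (n + 1) * ((n : ℤ) - i) * schmidtCoeff i n := by
  refine sum_range_induction _ (fun n => (-1) ^ (n + 1) * ((n : ℤ) - i) * schmidtCoeff i n) ?_ n
    fun k _ => ?_
  · rcases i with _ | i
    · simp
    · simp [schmidtCoeff_eq_zero_of_lt]
  have hk := add_one_sub_mul_choose k i
  have hki := add_one_sub_mul_choose (k + i) i
  simp only [schmidtCoeff, show k + 1 + i = k + i + 1 by ring]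
  push_cast at hk hki ⊢
  linear_combination (-1) ^ k * ((k + i + 1).choose i : ℤ) * hk
    + (-1) ^ k * (k.choose i : ℤ) * hki

lemma dvd_alternatingSum_schmidtCoeff (n i : ℕ) :
    (n : ℤ) ∣ alternatingSum n (schmidtCoeff i) := by
  rcases n with _ | n
  · simp [alternatingSum]
  refine ⟨(-1) ^ (n + 2) * n.choose i * (n + 1 + i).choose i, ?_⟩
  rw [alternatingSum_schmidtCoeff, schmidtCoeff]
  push_cast
  linear_combination (-1) ^ (n + 2) * ((n + 1 + i).choose i : ℤ) * add_one_sub_mul_choose n i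

lemma dvd_alternatingSum_of_mem {f : ℕ → ℤ} (hf : f ∈ schmidtAlgebra) (n : ℕ) :
    (n : ℤ) ∣ alternatingSum n f := by
  suffices schmidtSpan ≤
      Submodule.comap (alternatingSum n) (Ideal.span {(n : ℤ)}) from
    Ideal.mem_span_singleton.mp (this hf)
  rw [schmidtSpan, Submodule.span_le]
  rintro _ ⟨i, rfl⟩
  exact Ideal.mem_span_singleton.mpr (dvd_alternatingSum_schmidtCoeff n i)

theorem sum_schmidtPoly_pow_alt_dvd_general (r m n : ℕ) (hr : 0 < r) :
    ∀ d : ℕ,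
      (n : ℤ) ∣ (∑ k ∈ Finset.range n,
        ((-1 : ℤ) ^ k * (2 * (k : ℤ) + 1)) • (schmidtPoly r k) ^ m).coeff d := by
  intro d
  simp only [finsetSum_coeff, coeff_smul, smul_eq_mul]
  exact dvd_alternatingSum_of_mem (coeff_schmidtPoly_pow_mem hr.ne' m d) n

/-- For any positive integers `r`, `m`, `n`, every coefficient of
`∑_{k=0}^{n-1} (−1)^k (2k+1) · S_k^{(r)}(x)^m` is divisible by `n`. -/
theorem sum_schmidtPoly_pow_alt_dvd (r m n : ℕ) (hr : 0 < r) (hm : 0 < m) (hn : 0 < n) :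
    ∀ d : ℕ,
      (n : ℤ) ∣ (∑ k ∈ Finset.range n,
        ((-1 : ℤ) ^ k * (2 * (k : ℤ) + 1)) • (schmidtPoly r k) ^ m).coeff d :=
  sum_schmidtPoly_pow_alt_dvd_general r m n hr
end

section
/- Suppose that for a fixed nonnegative integer m and positive integer r, the integers b_{m,k}^{(r)} (m ≤ k ≤ rm) satisfy that C(k,m) divides b_{m,k}^{(r)} for each k. Define, for m ≤ j ≤ (r+1)m, b_{m,j}^{(r+1)} := C(j,m) · ∑_{k=m}^{rm} (b_{m,k}^{(r)} / C(k,m)) · C(m, j−k) · C(m+k, 2m). Then each b_{m,j}^{(r+1)} is an integer divisible by C(j,m), and if additionally C(ℓ+m,2m)^r · C(2m,m) = ∑_{k=m}^{rm} b_{m,k}^{(r)} · C(ℓ+k,2k) · C(2k,k) holds for all nonnegative integers ℓ, then C(ℓ+m,2m)^{r+1} · C(2m,m) = ∑_{j=m}^{(r+1)m} b_{m,j}^{(r+1)} · C(ℓ+j,2j) · C(2j,j) holds for all nonnegative integers ℓ. -/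
/-!
Write `F(ℓ) = C(m+k,2m) · Σ_s C(m,s) C(k+s,m) C(ℓ+k+s,2(k+s)) C(2(k+s),k+s)`. For `m ≤ k` the
linearization formula `F(ℓ) = C(k,m) C(2k,k) · C(ℓ+m,2m) C(ℓ+k,2k)` is all the theorem needs:
multiplying it by `b_k / C(k,m)`, summing over `k` and exchanging the sums turns
`Σ_j b'_j C(ℓ+j,2j) C(2j,j)` into `C(ℓ+m,2m) · Σ_k b_k C(ℓ+k,2k) C(2k,k)`.

The formula is proved by Zeilberger's method. With `C(ℓ+N,2N) C(2N,N) = C(ℓ+N,N) C(ℓ,N)`, an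
explicit certificate makes the summands of `F` telescope, so `F` satisfies the same first-order
recurrence `(ℓ+1-m)(ℓ+1-k) F(ℓ+1) = (ℓ+1+m)(ℓ+1+k) F(ℓ)` as the right-hand side. Both vanish for
`ℓ < k` and agree at `ℓ = k`, and the leading coefficient is nonzero for `ℓ ≥ k`.
-/

open Finset

theorem Nat.cast_choose_succ_right_eq (n k : ℕ) :
    (n.choose (k + 1) : ℤ) * (k + 1) = n.choose k * (n - k) := by
  rcases le_or_gt k n with hkn | hnk
  · have h := congrArg (Nat.cast (R := ℤ)) (Nat.choose_succ_right_eq n k)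
    push_cast [Nat.cast_sub hkn] at h
    exact h
  · simp [Nat.choose_eq_zero_of_lt hnk, Nat.choose_eq_zero_of_lt (hnk.trans k.lt_succ_self)]

theorem Nat.cast_choose_mul_succ_eq (n k : ℕ) :
    (n.choose k : ℤ) * (n + 1) = (n + 1).choose k * (n + 1 - k) := by
  rcases le_or_gt k (n + 1) with hkn | hnk
  · have h := congrArg (Nat.cast (R := ℤ)) (Nat.choose_mul_succ_eq n k)
    push_cast [Nat.cast_sub hkn] at h
    exact h
  · simp [Nat.choose_eq_zero_of_lt hnk, Nat.choose_eq_zero_of_lt (n.lt_succ_self.trans hnk)]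

theorem Nat.cast_add_one_mul_choose_eq (n k : ℕ) :
    ((n : ℤ) + 1) * n.choose k = (n + 1).choose (k + 1) * (k + 1) := by
  exact_mod_cast Nat.add_one_mul_choose_eq n k

theorem Nat.cast_choose_sub_one_mul_succ {n : ℕ} (hn : n ≠ 0) (ℓ : ℕ) :
    (ℓ.choose (n - 1) : ℤ) * (ℓ + 1) = n * (ℓ + 1).choose n := by
  obtain ⟨n, rfl⟩ := Nat.exists_eq_succ_of_ne_zero hn
  push_cast
  linear_combination Nat.cast_add_one_mul_choose_eq ℓ n

def zeilbergerTerm (m k ℓ s : ℕ) : ℤ :=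
  m.choose s * (k + s).choose m * (ℓ + (k + s)).choose (k + s) * ℓ.choose (k + s)

def zeilbergerCert (m k ℓ s : ℕ) : ℤ :=
  -2 * s * ((k : ℤ) + s - m) * m.choose s * (k + s).choose m *
    (ℓ + (k + s)).choose (k + s) * ℓ.choose (k + s - 1)

theorem zeilbergerTerm_recurrence (m k ℓ s : ℕ) :
    ((ℓ : ℤ) + 1 - m) * (ℓ + 1 - k) * zeilbergerTerm m k (ℓ + 1) s
      - ((ℓ : ℤ) + 1 + m) * (ℓ + 1 + k) * zeilbergerTerm m k ℓ s
      = zeilbergerCert m k ℓ (s + 1) - zeilbergerCert m k ℓ s := by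
  unfold zeilbergerTerm zeilbergerCert
  rw [show ℓ + 1 + (k + s) = ℓ + (k + s) + 1 by omega, show k + (s + 1) = k + s + 1 by omega,
    show ℓ + (k + s + 1) = ℓ + (k + s) + 1 by omega, Nat.add_sub_cancel]
  generalize hN : k + s = N
  -- `N - 1` truncates at `N = 0`, where the factor `s` vanishes
  have hq' : (s : ℤ) * (ℓ.choose (N - 1) * (ℓ + 1)) = s * (N * (ℓ + 1).choose N) := by
    rcases Nat.eq_zero_or_pos s with hs | hs
    · simp [hs]
    · rw [Nat.cast_choose_sub_one_mul_succ (by omega)]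
  have hp := Nat.cast_choose_mul_succ_eq (ℓ + N) N
  have hp' := Nat.cast_add_one_mul_choose_eq (ℓ + N) N
  have hq := Nat.cast_choose_mul_succ_eq ℓ N
  have hc := Nat.cast_choose_mul_succ_eq N m
  have ha := Nat.cast_choose_succ_right_eq m s
  push_cast at hp hp' hq hc ha ⊢
  -- Times `ℓ + 1`, each of the four terms is a polynomial multiple of `B := a * c * p * q`: the
  -- other denominators `s + 1`, `N + 1 - m`, `N + 1` are cancelled by factors of the certificate.
  set a : ℤ := (m.choose s : ℤ)
  set a' : ℤ := (m.choose (s + 1) : ℤ)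
  set c : ℤ := (N.choose m : ℤ)
  set c' : ℤ := ((N + 1).choose m : ℤ)
  set p : ℤ := ((ℓ + N).choose N : ℤ)
  set p₁ : ℤ := ((ℓ + N + 1).choose N : ℤ)
  set p' : ℤ := ((ℓ + N + 1).choose (N + 1) : ℤ)
  set q : ℤ := ((ℓ + 1).choose N : ℤ)
  set q₀ : ℤ := (ℓ.choose N : ℤ)
  set q' : ℤ := (ℓ.choose (N - 1) : ℤ)
  have hT1 : a * c * p₁ * q * (ℓ + 1) = (ℓ + 1 + N) * (a * c * p * q) := by
    linear_combination (-(a * c * q)) * hp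
  have hT0 : a * c * p * q₀ * (ℓ + 1) = (ℓ + 1 - N) * (a * c * p * q) := by
    linear_combination (a * c * p) * hq
  have hW0 : -2 * s * (N - m) * a * c * p * q' * (ℓ + 1)
      = -2 * (N - m) * s * N * (a * c * p * q) := by
    linear_combination (-2 * (N - m) * a * c * p) * hq'
  have hW1 : -2 * (s + 1) * (N + 1 - m) * a' * c' * p' * q₀ * (ℓ + 1)
      = -2 * (m - s) * (ℓ + N + 1) * (ℓ + 1 - N) * (a * c * p * q) := by
    linear_combination (-2) * ((N + 1 - m) * c' * p' * q₀ * (ℓ + 1) * ha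
      - a * (m - s) * p' * q₀ * (ℓ + 1) * hc + a * (m - s) * c * (N + 1) * p' * hq
      - a * (m - s) * c * q * (ℓ + 1 - N) * hp')
  refine mul_right_cancel₀ (b := (ℓ : ℤ) + 1) (by positivity) ?_
  subst hN
  push_cast at hT1 hT0 hW0 hW1
  linear_combination ((ℓ : ℤ) + 1 - m) * (ℓ + 1 - k) * hT1 - ((ℓ : ℤ) + 1 + m) * (ℓ + 1 + k) * hT0
    - hW1 + hW0

def zeilbergerSum (m k ℓ : ℕ) : ℤ :=
  ∑ s ∈ range (m + 1), zeilbergerTerm m k ℓ s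

theorem zeilbergerSum_recurrence (m k ℓ : ℕ) :
    ((ℓ : ℤ) + 1 - m) * (ℓ + 1 - k) * zeilbergerSum m k (ℓ + 1)
      = ((ℓ : ℤ) + 1 + m) * (ℓ + 1 + k) * zeilbergerSum m k ℓ := by
  have hW₀ : zeilbergerCert m k ℓ 0 = 0 := by simp [zeilbergerCert]
  have hWₘ : zeilbergerCert m k ℓ (m + 1) = 0 := by simp [zeilbergerCert]
  rw [← sub_eq_zero, zeilbergerSum, zeilbergerSum, mul_sum, mul_sum, ← sum_sub_distrib]
  simp only [zeilbergerTerm_recurrence]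
  rw [sum_range_sub, hW₀, hWₘ, sub_zero]

theorem Nat.cast_choose_two_mul_recurrence (m ℓ : ℕ) :
    ((ℓ : ℤ) + 1 - m) * (ℓ + 1 + m).choose (2 * m) = (ℓ + 1 + m) * (ℓ + m).choose (2 * m) := by
  have h := Nat.cast_choose_mul_succ_eq (ℓ + m) (2 * m)
  rw [show ℓ + 1 + m = ℓ + m + 1 by omega]
  push_cast at h ⊢
  linear_combination -h

theorem choose_mul_zeilbergerSum {m k : ℕ} (hmk : m ≤ k) (ℓ : ℕ) :
    (m + k).choose (2 * m) * zeilbergerSum m k ℓ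
      = k.choose m * (2 * k).choose k * ((ℓ + m).choose (2 * m) * (ℓ + k).choose (2 * k) : ℤ) := by
  rcases lt_or_ge ℓ k with hℓk | hkℓ
  · have hS : zeilbergerSum m k ℓ = 0 := sum_eq_zero fun s _ => by
      simp [zeilbergerTerm, Nat.choose_eq_zero_of_lt (show ℓ < k + s by omega)]
    simp [hS, Nat.choose_eq_zero_of_lt (show ℓ + k < 2 * k by omega)]
  induction ℓ, hkℓ using Nat.le_induction with
  | base =>
    have hS : zeilbergerSum m k k = k.choose m * (2 * k).choose k := by
      rw [zeilbergerSum, sum_eq_single_of_mem 0 (by simp)]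
      · simp [zeilbergerTerm, ← two_mul]
      · intro s _ hs
        simp [zeilbergerTerm, Nat.choose_eq_zero_of_lt (show k < k + s by omega)]
    simp only [hS, ← two_mul, add_comm k m, Nat.choose_self, Nat.cast_one, mul_one]
    ring
  | succ ℓ hkℓ ih =>
    have hne : ((ℓ : ℤ) + 1 - m) * (ℓ + 1 - k) ≠ 0 := by
      have : (k : ℤ) ≤ ℓ := by exact_mod_cast hkℓ
      have : (m : ℤ) ≤ k := by exact_mod_cast hmk
      exact mul_ne_zero (by omega) (by omega)
    refine mul_left_cancel₀ hne ?_
    linear_combination ((m + k).choose (2 * m) : ℤ) * zeilbergerSum_recurrence m k ℓ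
      + ((ℓ : ℤ) + 1 + m) * (ℓ + 1 + k) * ih
      - (k.choose m * (2 * k).choose k : ℤ) *
        ((ℓ + 1 - k) * (ℓ + 1 + k).choose (2 * k) * Nat.cast_choose_two_mul_recurrence m ℓ
          + (ℓ + 1 + m) * (ℓ + m).choose (2 * m) * Nat.cast_choose_two_mul_recurrence k ℓ)

theorem Nat.add_choose_two_mul_mul_choose (ℓ j : ℕ) :
    (ℓ + j).choose (2 * j) * (2 * j).choose j = (ℓ + j).choose j * ℓ.choose j := by
  rcases le_or_gt j ℓ with hjℓ | hℓj
  · rw [Nat.choose_mul (by omega), show ℓ + j - j = ℓ by omega, show 2 * j - j = j by omega]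
  · simp [Nat.choose_eq_zero_of_lt (show ℓ + j < 2 * j by omega), Nat.choose_eq_zero_of_lt hℓj]

theorem sum_choose_mul_choose_sub {m k : ℕ} (hmk : m ≤ k) {t : Finset ℕ}
    (ht : Icc k (k + m) ⊆ t) (ℓ : ℕ) :
    ∑ j ∈ t, (j.choose m : ℤ) * (if k ≤ j then (m.choose (j - k) : ℤ) else 0) *
        ((m + k).choose (2 * m) : ℤ) * ((ℓ + j).choose (2 * j) : ℤ) * ((2 * j).choose j : ℤ)
      = k.choose m * (ℓ + m).choose (2 * m) * (ℓ + k).choose (2 * k) * (2 * k).choose k := by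
  rw [← sum_subset ht]
  · rw [← Ico_add_one_right_eq_Icc, sum_Ico_eq_sum_range, show k + m + 1 - k = m + 1 by omega]
    calc _ = (m + k).choose (2 * m) * zeilbergerSum m k ℓ := by
          rw [zeilbergerSum, mul_sum]
          refine sum_congr rfl fun s _ => ?_
          have h := congrArg (Nat.cast (R := ℤ)) (Nat.add_choose_two_mul_mul_choose ℓ (k + s))
          push_cast at h
          rw [if_pos (by omega), Nat.add_sub_cancel_left, zeilbergerTerm]
          linear_combination ((m + k).choose (2 * m) * (k + s).choose m * m.choose s : ℤ) * h
      _ = _ := by rw [choose_mul_zeilbergerSum hmk]; ring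
  · intro j _ hj
    simp only [mem_Icc, not_and_or, not_le] at hj
    rcases hj with hjk | hkj
    · simp [hjk]
    · simp [Nat.choose_eq_zero_of_lt (show m < j - k by omega)]

theorem schmidt_lemma_induction_step_general (m r : ℕ) (b : ℕ → ℤ)
    (hdvd : ∀ k, m ≤ k → k ≤ r * m → ((k.choose m : ℤ)) ∣ b k) :
    (∀ j, m ≤ j → j ≤ (r + 1) * m →
      ((j.choose m : ℤ)) ∣
        (j.choose m : ℤ) *
          ∑ k ∈ Finset.Icc m (r * m),
            (b k / (k.choose m : ℤ)) * (if k ≤ j then (m.choose (j - k) : ℤ) else 0) *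
              ((m + k).choose (2 * m) : ℤ)) ∧
    ((∀ ℓ : ℕ,
        (((ℓ + m).choose (2 * m) : ℤ)) ^ r * ((2 * m).choose m : ℤ) =
          ∑ k ∈ Finset.Icc m (r * m),
            b k * ((ℓ + k).choose (2 * k) : ℤ) * ((2 * k).choose k : ℤ)) →
      ∀ ℓ : ℕ,
        (((ℓ + m).choose (2 * m) : ℤ)) ^ (r + 1) * ((2 * m).choose m : ℤ) =
          ∑ j ∈ Finset.Icc m ((r + 1) * m),
            ((j.choose m : ℤ) *
              ∑ k ∈ Finset.Icc m (r * m),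
                (b k / (k.choose m : ℤ)) * (if k ≤ j then (m.choose (j - k) : ℤ) else 0) *
                  ((m + k).choose (2 * m) : ℤ)) *
              ((ℓ + j).choose (2 * j) : ℤ) * ((2 * j).choose j : ℤ)) := by
  refine ⟨fun j _ _ => dvd_mul_right _ _, fun H ℓ => ?_⟩
  calc _ = (∑ k ∈ Icc m (r * m), b k * ((ℓ + k).choose (2 * k) : ℤ) * ((2 * k).choose k : ℤ))
        * (ℓ + m).choose (2 * m) := by rw [← H ℓ]; ring
    _ = ∑ k ∈ Icc m (r * m), b k / (k.choose m : ℤ) * ∑ j ∈ Icc m ((r + 1) * m),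
          (j.choose m : ℤ) * (if k ≤ j then (m.choose (j - k) : ℤ) else 0) *
            ((m + k).choose (2 * m) : ℤ) * ((ℓ + j).choose (2 * j) : ℤ) * ((2 * j).choose j : ℤ) := by
      rw [sum_mul]
      refine sum_congr rfl fun k hk => ?_
      obtain ⟨hmk, hkr⟩ := mem_Icc.mp hk
      have hsub : Icc k (k + m) ⊆ Icc m ((r + 1) * m) := fun j hj => by
        simp only [mem_Icc] at hj ⊢
        constructor <;> nlinarith
      rw [sum_choose_mul_choose_sub hmk hsub]
      linear_combination (-((ℓ + m).choose (2 * m) * (ℓ + k).choose (2 * k) * (2 * k).choose k : ℤ))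
        * Int.ediv_mul_cancel (hdvd k hmk hkr)
    _ = _ := by
      simp only [mul_sum, sum_mul]
      rw [sum_comm]
      exact sum_congr rfl fun j _ => sum_congr rfl fun k _ => by ring

/-- Induction step for Lemma 2.1: given integers `b k` (for `m ≤ k ≤ rm`), each divisible by
`C(k,m)`, define `b' j := C(j,m) · ∑_{k=m}^{rm} (b k / C(k,m)) · C(m,j−k) · C(m+k,2m)`
(where `C(m,j−k)` is taken to be `0` when `k > j`).  Then each `b' j` is divisible by
`C(j,m)`, and if `C(ℓ+m,2m)^r·C(2m,m) = ∑_{k=m}^{rm} b k·C(ℓ+k,2k)·C(2k,k)` for every `ℓ`,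
then `C(ℓ+m,2m)^{r+1}·C(2m,m) = ∑_{j=m}^{(r+1)m} b' j·C(ℓ+j,2j)·C(2j,j)` for every `ℓ`. -/
theorem schmidt_lemma_induction_step (m r : ℕ) (hr : 0 < r) (b : ℕ → ℤ)
    (hdvd : ∀ k, m ≤ k → k ≤ r * m → ((k.choose m : ℤ)) ∣ b k) :
    (∀ j, m ≤ j → j ≤ (r + 1) * m →
      ((j.choose m : ℤ)) ∣
        (j.choose m : ℤ) *
          ∑ k ∈ Finset.Icc m (r * m),
            (b k / (k.choose m : ℤ)) * (if k ≤ j then (m.choose (j - k) : ℤ) else 0) *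
              ((m + k).choose (2 * m) : ℤ)) ∧
    ((∀ ℓ : ℕ,
        (((ℓ + m).choose (2 * m) : ℤ)) ^ r * ((2 * m).choose m : ℤ) =
          ∑ k ∈ Finset.Icc m (r * m),
            b k * ((ℓ + k).choose (2 * k) : ℤ) * ((2 * k).choose k : ℤ)) →
      ∀ ℓ : ℕ,
        (((ℓ + m).choose (2 * m) : ℤ)) ^ (r + 1) * ((2 * m).choose m : ℤ) =
          ∑ j ∈ Finset.Icc m ((r + 1) * m),
            ((j.choose m : ℤ) *
              ∑ k ∈ Finset.Icc m (r * m),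
                (b k / (k.choose m : ℤ)) * (if k ≤ j then (m.choose (j - k) : ℤ) else 0) *
                  ((m + k).choose (2 * m) : ℤ)) *
              ((ℓ + j).choose (2 * j) : ℤ) * ((2 * j).choose j : ℤ)) :=
  schmidt_lemma_induction_step_general m r b hdvd
end
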